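/- The coalition number of the Petersen graph is at most 6. In particular, there is no coalition partition of the Petersen graph with 7 or more classes. -/

import Mathlib

/-!
In a coalition partition of a graph with no dominating set of at most two vertices, every part
is non-dominating and every singleton part `{v}` has a partner `B` with at least two vertices
such that `insert v B` dominates. With at least seven parts among ten vertices, the parts `B`
with `2 ≤ #B` satisfy `∑ (#B - 1) ≤ 3`, and together with their singleton partners they cover
every vertex.

In the Petersen graph, strongly regular with parameters `(10, 3, 0, 1)`, the singleton partners
of a non-dominating `B` lie in the closed neighbourhood of any vertex `u` that `B` leaves
undominated, so there are at most four of them, and at most one when `#B = 2`. Hence `B` with its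
partners covers at most `3 * (#B - 1)` vertices unless `#B = 3`, and the only configuration that
could still cover ten vertices is a triple `C` and a pair `B`. It fails too: if `p` is a partner
of `B`, then `insert p B` dominates the vertex `u` left undominated by `C`, so the sets covered
by `B` and by `C` (the latter inside `C ∪ N[u]`) overlap.
-/

open Finset

/-- `S` is a dominating set of `G`: every vertex outside `S` has a neighbor in `S`. -/
def Dominates {V : Type*} (G : SimpleGraph V) (S : Finset V) : Prop :=
  ∀ v ∉ S, ∃ u ∈ S, G.Adj u v

/-- Two disjoint non-dominating sets whose union dominates form a coalition. -/
def FormsCoalition {V : Type*} [DecidableEq V] (G : SimpleGraph V) (X Y : Finset V) : Prop :=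
  ¬ Dominates G X ∧ ¬ Dominates G Y ∧ Dominates G (X ∪ Y)

/-- A coalition partition: every class is a singleton dominating set, or is a
non-dominating set forming a coalition with another class. -/
def IsCoalitionPartition {V : Type*} [Fintype V] [DecidableEq V] (G : SimpleGraph V)
    (π : Finpartition (univ : Finset V)) : Prop :=
  ∀ X ∈ π.parts, (X.card = 1 ∧ Dominates G X) ∨
    (¬ Dominates G X ∧ ∃ Y ∈ π.parts, Y ≠ X ∧ ¬ Dominates G Y ∧ Dominates G (X ∪ Y))

/-- The coalition number: the maximum order of a coalition partition. -/
noncomputable def coalitionNumber (V : Type*) [Fintype V] [DecidableEq V]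
    (G : SimpleGraph V) : ℕ :=
  sSup {k | ∃ π : Finpartition (univ : Finset V), IsCoalitionPartition G π ∧ π.parts.card = k}

def petersenK : SimpleGraph {s : Finset (Fin 5) // s.card = 2} :=
  SimpleGraph.fromRel (fun a b => Disjoint a.1 b.1)

namespace SimpleGraph

variable {V : Type*} [Fintype V] [DecidableEq V]

def closedNeighborFinset (G : SimpleGraph V) [DecidableRel G.Adj] (v : V) : Finset V :=
  insert v (G.neighborFinset v)

variable {G : SimpleGraph V} [DecidableRel G.Adj] {n k ℓ μ : ℕ}

@[simp]
lemma mem_closedNeighborFinset {u v : V} :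
    u ∈ G.closedNeighborFinset v ↔ u = v ∨ G.Adj v u := by
  simp [closedNeighborFinset]

lemma mem_closedNeighborFinset_comm {u v : V} :
    u ∈ G.closedNeighborFinset v ↔ v ∈ G.closedNeighborFinset u := by
  simp only [mem_closedNeighborFinset, eq_comm, G.adj_comm]

lemma card_neighborFinset_inter_neighborFinset (v w : V) :
    #(G.neighborFinset v ∩ G.neighborFinset w) = Fintype.card (G.commonNeighbors v w) := by
  rw [← Set.toFinset_card]
  congr 1
  ext u
  simp [mem_commonNeighbors]

lemma IsSRGWith.card_closedNeighborFinset (h : G.IsSRGWith n k ℓ μ) (v : V) :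
    #(G.closedNeighborFinset v) = k + 1 := by
  rw [closedNeighborFinset, card_insert_of_notMem (G.notMem_neighborFinset_self v),
    card_neighborFinset_eq_degree, h.regular.degree_eq]

lemma IsSRGWith.card_closedNeighborFinset_inter_le (h : G.IsSRGWith n k ℓ μ) {v w : V}
    (hvw : v ≠ w) :
    #(G.closedNeighborFinset v ∩ G.closedNeighborFinset w) ≤ max (ℓ + 2) μ := by
  by_cases hadj : G.Adj v w
  · have hsub : G.closedNeighborFinset v ∩ G.closedNeighborFinset w ⊆
        insert v (insert w (G.neighborFinset v ∩ G.neighborFinset w)) := by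
      intro u
      simp only [mem_inter, mem_closedNeighborFinset, mem_insert, mem_neighborFinset]
      tauto
    have h₁ := card_le_card hsub
    have h₂ := card_insert_le v (insert w (G.neighborFinset v ∩ G.neighborFinset w))
    have h₃ := card_insert_le w (G.neighborFinset v ∩ G.neighborFinset w)
    rw [card_neighborFinset_inter_neighborFinset, h.of_adj v w hadj] at h₃
    omega
  · have heq : G.closedNeighborFinset v ∩ G.closedNeighborFinset w =
        G.neighborFinset v ∩ G.neighborFinset w := by
      ext u
      simp only [mem_inter, mem_closedNeighborFinset, mem_neighborFinset]
      constructor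
      · rintro ⟨rfl | hvu, rfl | hwu⟩ <;> simp_all [G.adj_comm]
      · rintro ⟨hvu, hwu⟩; exact ⟨Or.inr hvu, Or.inr hwu⟩
    rw [heq, card_neighborFinset_inter_neighborFinset, h.of_not_adj hvw hadj]
    omega

lemma IsSRGWith.closedNeighborFinset_inter_nonempty (h : G.IsSRGWith n k ℓ μ) (hμ : μ ≠ 0)
    (v w : V) : (G.closedNeighborFinset v ∩ G.closedNeighborFinset w).Nonempty := by
  by_cases hvw : v = w
  · exact ⟨v, by simp [hvw]⟩
  by_cases hadj : G.Adj v w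
  · exact ⟨w, by simp [hadj]⟩
  obtain ⟨⟨u, hu⟩⟩ := Fintype.card_pos_iff.mp (Nat.pos_of_ne_zero (h.of_not_adj hvw hadj ▸ hμ))
  rw [mem_commonNeighbors] at hu
  exact ⟨u, by simp [hu]⟩

end SimpleGraph

lemma Finpartition.sum_card_sub_one_add_card_parts {α : Type*} [DecidableEq α] {s : Finset α}
    (P : Finpartition s) : ∑ X ∈ P.parts, (#X - 1) + #P.parts = #s := by
  rw [← P.sum_card_parts, card_eq_sum_ones, ← sum_add_distrib]
  exact sum_congr rfl fun X hX => Nat.sub_add_cancel (P.nonempty_of_mem_parts hX).card_pos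

section Coalition

open SimpleGraph

variable {V : Type*} [Fintype V] [DecidableEq V] {G : SimpleGraph V}

lemma IsCoalitionPartition.not_dominates {π : Finpartition (univ : Finset V)}
    (hπ : IsCoalitionPartition G π) (hγ : ∀ S : Finset V, #S ≤ 2 → ¬ Dominates G S)
    {X : Finset V} (hX : X ∈ π.parts) : ¬ Dominates G X := by
  rcases hπ X hX with ⟨hX1, hdom⟩ | ⟨hnd, -⟩
  · exact absurd hdom (hγ X (by omega))
  · exact hnd

variable [DecidableRel G.Adj]

instance : DecidablePred (Dominates G) := fun S =>
  inferInstanceAs (Decidable (∀ v ∉ S, ∃ u ∈ S, G.Adj u v))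

lemma dominates_iff_forall_exists_mem_closedNeighborFinset {S : Finset V} :
    Dominates G S ↔ ∀ v, ∃ u ∈ S, v ∈ G.closedNeighborFinset u := by
  simp only [mem_closedNeighborFinset]
  constructor
  · intro h v
    by_cases hv : v ∈ S
    · exact ⟨v, hv, Or.inl rfl⟩
    · obtain ⟨u, hu, huv⟩ := h v hv
      exact ⟨u, hu, Or.inr huv⟩
  · intro h v hv
    obtain ⟨u, hu, rfl | huv⟩ := h v
    · exact absurd hu hv
    · exact ⟨u, hu, huv⟩

lemma exists_forall_notMem_closedNeighborFinset {S : Finset V} (hS : ¬ Dominates G S) :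
    ∃ u, ∀ w ∈ S, u ∉ G.closedNeighborFinset w := by
  simpa [dominates_iff_forall_exists_mem_closedNeighborFinset] using hS

lemma card_le_mul_card_of_dominates {d : ℕ} (hd : ∀ v, #(G.closedNeighborFinset v) ≤ d)
    {S : Finset V} (hS : Dominates G S) : Fintype.card V ≤ d * #S := by
  have hcover : univ ⊆ S.biUnion G.closedNeighborFinset := fun v _ =>
    mem_biUnion.mpr (dominates_iff_forall_exists_mem_closedNeighborFinset.mp hS v)
  calc Fintype.card V ≤ #(S.biUnion G.closedNeighborFinset) := card_le_card hcover
    _ ≤ #S * d := card_biUnion_le_card_mul _ _ _ fun v _ => hd v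
    _ = d * #S := mul_comm _ _

variable (G) in
def completers (B : Finset V) : Finset V :=
  {v | Dominates G (insert v B)}

lemma mem_completers {B : Finset V} {v : V} : v ∈ completers G B ↔ Dominates G (insert v B) := by
  simp [completers]

lemma completers_subset_closedNeighborFinset {B : Finset V} {u : V}
    (hu : ∀ w ∈ B, u ∉ G.closedNeighborFinset w) :
    completers G B ⊆ G.closedNeighborFinset u := fun v hv => by
  obtain ⟨w, hw, huw⟩ :=
    dominates_iff_forall_exists_mem_closedNeighborFinset.mp (mem_completers.mp hv) u
  rcases mem_insert.mp hw with rfl | hw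
  · exact mem_closedNeighborFinset_comm.mp huw
  · exact absurd huw (hu w hw)

lemma IsCoalitionPartition.exists_mem_union_completers {π : Finpartition (univ : Finset V)}
    (hπ : IsCoalitionPartition G π) (hγ : ∀ S : Finset V, #S ≤ 2 → ¬ Dominates G S) (v : V) :
    ∃ B ∈ π.parts, 2 ≤ #B ∧ v ∈ B ∪ completers G B := by
  obtain ⟨X, hX, hvX⟩ := π.exists_mem (mem_univ v)
  by_cases hX2 : 2 ≤ #X
  · exact ⟨X, hX, hX2, mem_union_left _ hvX⟩
  have hXv : X = {v} :=
    eq_singleton_iff_unique_mem.mpr ⟨hvX, fun x hx => card_le_one.mp (by omega) x hx v hvX⟩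
  rcases hπ X hX with ⟨-, hdom⟩ | ⟨-, Y, hY, hYX, -, hdom⟩
  · exact absurd hdom (hγ X (by omega))
  have hvY : v ∉ Y := fun hvY => hYX (π.eq_of_mem_parts hY hX hvY hvX)
  have hXY : X ∪ Y = insert v Y := by rw [hXv, insert_eq]
  refine ⟨Y, hY, ?_, mem_union_right _ (mem_completers.mpr (hXY ▸ hdom))⟩
  by_contra hY2
  exact hγ (X ∪ Y) (by rw [hXY]; have := card_insert_le v Y; omega) hdom

lemma not_dominates_of_card_le_two (hG : G.IsSRGWith 10 3 0 1) {S : Finset V} (hS : #S ≤ 2) :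
    ¬ Dominates G S := fun h => by
  have := card_le_mul_card_of_dominates (fun v => (hG.card_closedNeighborFinset v).le) h
  rw [hG.card] at this
  omega

lemma card_union_completers_le (hG : G.IsSRGWith 10 3 0 1) {B : Finset V}
    (hB : ¬ Dominates G B) : #(B ∪ completers G B) ≤ #B + 4 := by
  obtain ⟨u, hu⟩ := exists_forall_notMem_closedNeighborFinset hB
  calc #(B ∪ completers G B) ≤ #B + #(completers G B) := card_union_le _ _
    _ ≤ #B + #(G.closedNeighborFinset u) :=
        add_le_add_right (card_le_card (completers_subset_closedNeighborFinset hu)) _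
    _ = #B + 4 := by rw [hG.card_closedNeighborFinset]

lemma card_completers_le_one (hG : G.IsSRGWith 10 3 0 1) {B : Finset V} (hB : #B = 2) :
    #(completers G B) ≤ 1 := by
  obtain ⟨a, b, -, rfl⟩ := card_eq_two.mp hB
  set U := (G.closedNeighborFinset a ∪ G.closedNeighborFinset b)ᶜ
  have hU : 3 ≤ #U := by
    have h₁ := card_union_add_card_inter (G.closedNeighborFinset a) (G.closedNeighborFinset b)
    have h₂ := (hG.closedNeighborFinset_inter_nonempty one_ne_zero a b).card_pos
    rw [hG.card_closedNeighborFinset, hG.card_closedNeighborFinset] at h₁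
    rw [card_compl, hG.card]
    omega
  by_contra! h
  obtain ⟨v, hv, v', hv', hne⟩ := one_lt_card.mp h
  have hsub : U ⊆ G.closedNeighborFinset v ∩ G.closedNeighborFinset v' := fun u hu => by
    have hu' : ∀ w ∈ ({a, b} : Finset V), u ∉ G.closedNeighborFinset w := by
      simpa [U, not_or] using hu
    exact mem_inter.mpr
      ⟨mem_closedNeighborFinset_comm.mp (completers_subset_closedNeighborFinset hu' hv),
        mem_closedNeighborFinset_comm.mp (completers_subset_closedNeighborFinset hu' hv')⟩
  have := (card_le_card hsub).trans (hG.card_closedNeighborFinset_inter_le hne)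
  omega

lemma card_union_completers_union_le (hG : G.IsSRGWith 10 3 0 1) {B C : Finset V}
    (hB : #B = 2) (hC : ¬ Dominates G C) :
    #((B ∪ completers G B) ∪ (C ∪ completers G C)) ≤ #C + 6 := by
  have hBc := card_completers_le_one hG hB
  obtain h0 | ⟨p, hp⟩ := (completers G B).eq_empty_or_nonempty
  · rw [h0, union_empty]
    have := card_union_completers_le hG hC
    have := card_union_le B (C ∪ completers G C)
    omega
  obtain ⟨u, hu⟩ := exists_forall_notMem_closedNeighborFinset hC
  -- `insert p B` dominates `u`, so the closed neighbourhood of `u` meets `B ∪ completers G B`.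
  obtain ⟨w, hw, huw⟩ :=
    dominates_iff_forall_exists_mem_closedNeighborFinset.mp (mem_completers.mp hp) u
  have hwB : w ∈ B ∪ completers G B := by
    rcases mem_insert.mp hw with rfl | hw
    exacts [mem_union_right _ hp, mem_union_left _ hw]
  have hwN : w ∈ C ∪ G.closedNeighborFinset u :=
    mem_union_right _ (mem_closedNeighborFinset_comm.mp huw)
  have hinter : 1 ≤ #((B ∪ completers G B) ∩ (C ∪ G.closedNeighborFinset u)) :=
    card_pos.mpr ⟨w, mem_inter.mpr ⟨hwB, hwN⟩⟩
  have h₁ := card_union_add_card_inter (B ∪ completers G B) (C ∪ G.closedNeighborFinset u)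
  have h₂ := card_union_le B (completers G B)
  have h₃ := card_union_le C (G.closedNeighborFinset u)
  rw [hG.card_closedNeighborFinset] at h₃
  calc _ ≤ #((B ∪ completers G B) ∪ (C ∪ G.closedNeighborFinset u)) :=
        card_le_card (union_subset_union_right
          (union_subset_union_right (completers_subset_closedNeighborFinset hu)))
    _ ≤ #C + 6 := by omega

lemma card_union_completers_le_three_mul (hG : G.IsSRGWith 10 3 0 1) {B : Finset V}
    (hB : ¬ Dominates G B) (h2 : 2 ≤ #B) (h3 : #B ≠ 3) :
    #(B ∪ completers G B) ≤ 3 * (#B - 1) := by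
  have := card_union_le B (completers G B)
  have := card_union_completers_le hG hB
  by_cases hB2 : #B = 2
  · have := card_completers_le_one hG hB2
    omega
  · omega

lemma card_biUnion_union_completers_le_nine (hG : G.IsSRGWith 10 3 0 1)
    (𝓑 : Finset (Finset V)) (hnd : ∀ B ∈ 𝓑, ¬ Dominates G B) (h2 : ∀ B ∈ 𝓑, 2 ≤ #B)
    (hexcess : ∑ B ∈ 𝓑, (#B - 1) ≤ 3) :
    #(𝓑.biUnion fun B => B ∪ completers G B) ≤ 9 := by
  by_cases h3 : ∃ C ∈ 𝓑, #C = 3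
  · obtain ⟨C, hC, hC3⟩ := h3
    have hrest : ∑ B ∈ 𝓑.erase C, (#B - 1) ≤ 1 := by
      have := sum_erase_add 𝓑 (fun B => #B - 1) hC
      omega
    rw [← insert_erase hC, biUnion_insert]
    obtain h0 | ⟨B, hB⟩ := (𝓑.erase C).eq_empty_or_nonempty
    · rw [h0, biUnion_empty, union_empty]
      have := card_union_completers_le hG (hnd C hC)
      omega
    have hcard : #(𝓑.erase C) ≤ 1 := (card_eq_sum_ones _).trans_le <|
      (sum_le_sum fun B' hB' => by have := h2 B' (mem_of_mem_erase hB'); omega).trans hrest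
    have hBC : 𝓑.erase C = {B} := eq_singleton_iff_unique_mem.mpr
      ⟨hB, fun B' hB' => card_le_one.mp hcard B' hB' B hB⟩
    have hB2 : #B = 2 := by
      have := h2 B (mem_of_mem_erase hB)
      rw [hBC, sum_singleton] at hrest
      omega
    rw [hBC, singleton_biUnion, union_comm]
    have := card_union_completers_union_le hG hB2 (hnd C hC)
    omega
  · push Not at h3
    calc _ ≤ ∑ B ∈ 𝓑, #(B ∪ completers G B) := card_biUnion_le
      _ ≤ ∑ B ∈ 𝓑, 3 * (#B - 1) := sum_le_sum fun B hB =>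
          card_union_completers_le_three_mul hG (hnd B hB) (h2 B hB) (h3 B hB)
      _ = 3 * ∑ B ∈ 𝓑, (#B - 1) := (mul_sum _ _ _).symm
      _ ≤ 9 := by omega

theorem IsCoalitionPartition.card_parts_le_six (hG : G.IsSRGWith 10 3 0 1)
    {π : Finpartition (univ : Finset V)} (hπ : IsCoalitionPartition G π) : #π.parts ≤ 6 := by
  have hγ : ∀ S : Finset V, #S ≤ 2 → ¬ Dominates G S := fun _ => not_dominates_of_card_le_two hG
  by_contra! h7
  set 𝓑 := π.parts.filter fun X => 2 ≤ #X
  have hexcess : ∑ B ∈ 𝓑, (#B - 1) + #π.parts = 10 := by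
    rw [sum_filter_of_ne fun X _ h => by omega, π.sum_card_sub_one_add_card_parts, card_univ,
      hG.card]
  have hcover : univ ⊆ 𝓑.biUnion fun B => B ∪ completers G B := fun v _ => by
    obtain ⟨B, hB, hB2, hvB⟩ := hπ.exists_mem_union_completers hγ v
    exact mem_biUnion.mpr ⟨B, mem_filter.mpr ⟨hB, hB2⟩, hvB⟩
  have h9 := card_biUnion_union_completers_le_nine hG 𝓑
    (fun B hB => hπ.not_dominates hγ (mem_filter.mp hB).1) (fun B hB => (mem_filter.mp hB).2)
    (by omega)
  have := card_le_card hcover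
  rw [card_univ, hG.card] at this
  omega

end Coalition

instance : DecidableRel petersenK.Adj := fun a b =>
  decidable_of_iff' (a ≠ b ∧ (Disjoint a.1 b.1 ∨ Disjoint b.1 a.1))
    (SimpleGraph.fromRel_adj _ a b)

theorem petersenK_isSRGWith : petersenK.IsSRGWith 10 3 0 1 where
  card := by decide
  regular _ := by decide +revert
  of_adj := by decide
  of_not_adj := by unfold Pairwise; decide

theorem stmt10 : coalitionNumber {s : Finset (Fin 5) // s.card = 2} petersenK ≤ 6 ∧
    ¬ ∃ π : Finpartition (univ : Finset {s : Finset (Fin 5) // s.card = 2}),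
      IsCoalitionPartition petersenK π ∧ 7 ≤ π.parts.card := by
  have hle := fun π (hπ : IsCoalitionPartition petersenK π) =>
    hπ.card_parts_le_six petersenK_isSRGWith
  refine ⟨csSup_le' ?_, fun ⟨π, hπ, h7⟩ => by have := hle π hπ; omega⟩
  rintro k ⟨π, hπ, rfl⟩
  exact hle π hπ
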